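/- For every compact subset K of the Sorgenfrey line ℝₗ there exists a countable set Q ⊆ ℚ of rational numbers such that K ∪ Q is compact in ℝₗ and Q is dense in K ∪ Q (in the subspace topology). Consequently every compact subset of ℝₗ is contained in a compact subset that is separable with a dense set of rational points. -/

import Mathlib

open Set Topology

def SorgenfreyLine : Type := ℝ

notation "ℝₗ" => SorgenfreyLine

noncomputable instance : Field ℝₗ := inferInstanceAs (Field ℝ)

noncomputable instance : LinearOrder ℝₗ := inferInstanceAs (LinearOrder ℝ)

instance : IsStrictOrderedRing ℝₗ := inferInstanceAs (IsStrictOrderedRing ℝ)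

instance : TopologicalSpace ℝₗ :=
  TopologicalSpace.generateFrom {s : Set ℝₗ | ∃ a b : ℝₗ, a < b ∧ s = Set.Ico a b}

/-- The spread of a topological space: the supremum of cardinalities of discrete subspaces. -/
noncomputable def spread (X : Type*) [TopologicalSpace X] : Cardinal :=
  sSup {c : Cardinal | ∃ D : Set X, DiscreteTopology D ∧ Cardinal.mk D = c}

def Cometrizable (Y : Type*) [t : TopologicalSpace Y] : Prop :=
  ∃ τ : TopologicalSpace Y, t ≤ τ ∧ @TopologicalSpace.MetrizableSpace Y τ ∧
    ∀ y : Y, ∀ U ∈ nhds y, ∃ V ∈ nhds y, V ⊆ U ∧ IsClosed[τ] V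

def IsKDense {X : Type*} [TopologicalSpace X] (D : Set X) : Prop :=
  ∀ K : Set X, IsCompact K → ∃ K' : Set X, IsCompact K' ∧ K ⊆ K' ∧ K' ⊆ closure (D ∩ K')

def KSeparable (X : Type*) [TopologicalSpace X] : Prop :=
  ∃ D : Set X, D.Countable ∧ IsKDense D

/-!
For `c > 0`, the points of `K` followed by a gap of length `c` in `K` are `c` apart, so only
finitely many of them fit into the finitely many intervals `[x, x + c)` covering `K`. Put a
rational into the gap after each such point, within `1 / (n + 1)` of it for `c = 1 / (n + 1)`.
These rationals are dense in `K`: for `x ∈ K` and `b > x`, the largest point of `K` below `b`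
starts a gap reaching `b`. And `K ∪ Q` is compact: each stage is finite, and an ultrafilter that
escapes all finite stages converges to the limit of the base points of its rationals, because a
rational of stage `n` lies within `1 / (n + 1)` to the right of its base point.
-/

open Filter TopologicalSpace

namespace SorgenfreyLine

instance : Archimedean ℝₗ := inferInstanceAs (Archimedean ℝ)

theorem isTopologicalBasis_Ico :
    IsTopologicalBasis {s : Set ℝₗ | ∃ a b : ℝₗ, a < b ∧ s = Ico a b} := by
  refine ⟨?_, ?_, rfl⟩
  · rintro _ ⟨a, b, -, rfl⟩ _ ⟨c, d, -, rfl⟩ x hx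
    have hx' : x ∈ Ico (max a c) (min b d) := ⟨max_le hx.1.1 hx.2.1, lt_min hx.1.2 hx.2.2⟩
    exact ⟨_, ⟨_, _, hx'.1.trans_lt hx'.2, rfl⟩, hx', Ico_inter_Ico.ge⟩
  · exact sUnion_eq_univ_iff.2 fun x => ⟨Ico x (x + 1), ⟨x, x + 1, by linarith, rfl⟩,
      le_rfl, by linarith⟩

theorem nhds_basis_Ico (a : ℝₗ) : (𝓝 a).HasBasis (a < ·) (Ico a ·) := by
  refine ⟨fun t => isTopologicalBasis_Ico.mem_nhds_iff.trans ⟨?_, ?_⟩⟩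
  · rintro ⟨_, ⟨c, b, -, rfl⟩, ha, hst⟩
    exact ⟨b, ha.2, (Ico_subset_Ico_left ha.1).trans hst⟩
  · rintro ⟨b, hab, hst⟩
    exact ⟨Ico a b, ⟨a, b, hab, rfl⟩, ⟨le_rfl, hab⟩, hst⟩

theorem Ico_mem_nhds {a b : ℝₗ} (h : a < b) : Ico a b ∈ 𝓝 a :=
  (nhds_basis_Ico a).mem_of_mem h

theorem isOpen_iff {s : Set ℝₗ} : IsOpen s ↔ ∀ x ∈ s, ∃ b, x < b ∧ Ico x b ⊆ s := by
  simp only [isOpen_iff_mem_nhds, (nhds_basis_Ico _).mem_iff]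

theorem isOpen_Ici (a : ℝₗ) : IsOpen (Ici a) :=
  isOpen_iff.2 fun x hx => ⟨x + 1, by linarith, fun _ hy => le_trans hx hy.1⟩

instance : ClosedIciTopology ℝₗ :=
  ⟨fun a => isOpen_compl_iff.1 <| by
    rw [compl_Ici]
    exact isOpen_iff.2 fun x hx => ⟨a, hx, fun _ hy => hy.2⟩⟩

theorem isClosed_Iio (a : ℝₗ) : IsClosed (Iio a) := by
  rw [← compl_Ici]
  exact (isOpen_Ici a).isClosed_compl

def gapStarts (K : Set ℝₗ) (c : ℝₗ) : Set ℝₗ := {x ∈ K | Disjoint (Ioo x (x + c)) K}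

theorem add_le_of_mem_gapStarts {K : Set ℝₗ} {c x y : ℝₗ} (hx : x ∈ gapStarts K c) (hy : y ∈ K)
    (hxy : x < y) : x + c ≤ y :=
  not_lt.1 fun h => disjoint_left.1 hx.2 ⟨hxy, h⟩ hy

theorem finite_gapStarts {K : Set ℝₗ} (hK : IsCompact K) {c : ℝₗ} (hc : 0 < c) :
    (gapStarts K c).Finite := by
  obtain ⟨t, -, hKt⟩ := hK.elim_nhds_subcover (fun x => Ico x (x + c))
    fun x _ => Ico_mem_nhds (lt_add_of_pos_right x hc)
  have hsub : ∀ x, (Ico x (x + c) ∩ gapStarts K c).Subsingleton := by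
    intro x
    have hle : ∀ y₁ ∈ Ico x (x + c) ∩ gapStarts K c, ∀ y₂ ∈ Ico x (x + c) ∩ gapStarts K c,
        y₁ ≤ y₂ := fun y₁ h₁ y₂ h₂ => not_lt.1 fun h => by
      linarith [add_le_of_mem_gapStarts h₂.2 h₁.2.1 h, h₁.1.2, h₂.1.1]
    exact fun y₁ h₁ y₂ h₂ => le_antisymm (hle y₁ h₁ y₂ h₂) (hle y₂ h₂ y₁ h₁)
  refine (t.finite_toSet.biUnion fun x _ => (hsub x).finite).subset fun y hy => ?_
  obtain ⟨x, hx, hyx⟩ := mem_iUnion₂.1 (hKt hy.1)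
  exact mem_iUnion₂.2 ⟨x, hx, hyx, hy⟩

theorem subset_closure_of_inter_gaps_nonempty {K Q : Set ℝₗ} (hK : IsCompact K)
    (hQ : ∀ x ∈ K, ∀ c, x < c → Disjoint (Ioo x c) K → (Ioo x c ∩ Q).Nonempty) :
    K ⊆ closure Q := by
  intro x hx
  refine (mem_closure_iff_nhds_basis (nhds_basis_Ico x)).2 fun c hc => ?_
  -- the last point of `K` before `c` starts a gap of `K` ending at `c`
  obtain ⟨t, ⟨htK, htc⟩, ht⟩ := (hK.inter_right (isClosed_Iio c)).exists_isGreatest ⟨x, hx, hc⟩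
  have hgap : Disjoint (Ioo t c) K :=
    disjoint_left.2 fun z hz hzK => (ht ⟨hzK, hz.2⟩).not_gt hz.1
  obtain ⟨q, hq, hqQ⟩ := hQ t htK c htc hgap
  exact ⟨q, hqQ, (ht ⟨hx, hc⟩).trans hq.1.le, hq.2⟩

theorem isCompact_union_iUnion {K : Set ℝₗ} {F : ℕ → Set ℝₗ} (hK : IsCompact K)
    (hF : ∀ n, IsCompact (F n)) (hFK : ∀ n, ∀ q ∈ F n, ∃ x ∈ K, q ∈ Ico x (x + 1 / (n + 1))) :
    IsCompact (K ∪ ⋃ n, F n) := by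
  refine isCompact_iff_ultrafilter_le_nhds'.2 fun f hf => ?_
  by_cases hfin : ∃ N, K ∪ ⋃ n < N, F n ∈ f
  · obtain ⟨N, hN⟩ := hfin
    have hcompact : IsCompact (K ∪ ⋃ n < N, F n) :=
      hK.union ((finite_Iio N).isCompact_biUnion fun n _ => hF n)
    obtain ⟨x, hx, hfx⟩ := hcompact.ultrafilter_le_nhds' f hN
    exact ⟨x, union_subset_union_right K (iUnion₂_subset fun n _ => subset_iUnion F n) hx, hfx⟩
  simp only [not_exists] at hfin
  have hfar : ∀ N, (⋃ n < N, F n)ᶜ ∈ f := fun N =>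
    Ultrafilter.compl_mem_iff_notMem.2 fun h => hfin N (mem_of_superset h subset_union_right)
  have hU : ⋃ n, F n ∈ f := by
    have hKc : Kᶜ ∈ f :=
      Ultrafilter.compl_mem_iff_notMem.2 fun h => hfin 0 (mem_of_superset h subset_union_left)
    exact mem_of_superset (inter_mem hf hKc) fun q ⟨hq, hqK⟩ => hq.resolve_left hqK
  -- the ultrafilter escapes every finite stage, so it follows its base points in `K`
  have hbase : ∀ q ∈ ⋃ n, F n, ∃ x ∈ K, ∃ n, q ∈ F n ∧ q ∈ Ico x (x + 1 / (n + 1)) := by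
    intro q hq
    obtain ⟨n, hn⟩ := mem_iUnion.1 hq
    obtain ⟨x, hx, hqx⟩ := hFK n q hn
    exact ⟨x, hx, n, hn, hqx⟩
  choose! base hbaseK level hlevel hqbase using hbase
  obtain ⟨x₀, hx₀, hfx₀⟩ := hK.ultrafilter_le_nhds' (f.map base)
    (Ultrafilter.mem_map.2 (mem_of_superset hU hbaseK))
  refine ⟨x₀, Or.inl hx₀, (nhds_basis_Ico x₀).ge_iff.2 fun c hc => ?_⟩
  obtain ⟨N, hN⟩ := exists_nat_one_div_lt (half_pos (sub_pos.2 hc))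
  have hnear : base ⁻¹' Ico x₀ (x₀ + (c - x₀) / 2) ∈ f :=
    hfx₀ (Ico_mem_nhds (by linarith))
  filter_upwards [hU, hfar N, hnear] with q hqU hqN hqb
  have hNq : N ≤ level q := not_lt.1 fun h => hqN (mem_iUnion₂.2 ⟨_, h, hlevel q hqU⟩)
  have hsmall : 1 / ((level q : ℝₗ) + 1) ≤ 1 / ((N : ℝₗ) + 1) := Nat.one_div_le_one_div hNq
  exact ⟨hqb.1.trans (hqbase q hqU).1, by linarith [(hqbase q hqU).2, hqb.2]⟩

end SorgenfreyLine

open SorgenfreyLine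

/-- Every compact subset $K$ of the Sorgenfrey line can be enlarged by a countable set $Q$ of
rationals so that $K \cup Q$ is compact and $Q$ is dense in $K \cup Q$. -/
theorem compact_subset_rational_separable_compact :
    ∀ K : Set ℝₗ, IsCompact K →
      ∃ Q : Set ℝₗ, Q.Countable ∧ Q ⊆ Set.range (fun q : ℚ => (q : ℝₗ)) ∧
        IsCompact (K ∪ Q) ∧ K ∪ Q ⊆ closure Q := by
  intro K hK
  choose r hr using fun (n : ℕ) (x : ℝₗ) =>
    exists_rat_btwn (lt_add_of_pos_right x (Nat.one_div_pos_of_nat (n := n)))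
  set F : ℕ → Set ℝₗ := fun n => (fun x => (r n x : ℝₗ)) '' gapStarts K (1 / (n + 1))
  have hFrat : ⋃ n, F n ⊆ range (fun q : ℚ => (q : ℝₗ)) := by
    rintro _ ⟨_, ⟨n, rfl⟩, x, -, rfl⟩
    exact mem_range_self _
  refine ⟨⋃ n, F n, (countable_range _).mono hFrat, hFrat, ?_,
    union_subset (subset_closure_of_inter_gaps_nonempty hK ?_) subset_closure⟩
  · refine isCompact_union_iUnion hK
      (fun n => ((finite_gapStarts hK Nat.one_div_pos_of_nat).image _).isCompact) ?_
    rintro n _ ⟨x, hx, rfl⟩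
    exact ⟨x, hx.1, (hr n x).1.le, (hr n x).2⟩
  · intro x hx c hxc hgap
    obtain ⟨n, hn⟩ := exists_nat_one_div_lt (sub_pos.2 hxc)
    have hxn : x ∈ gapStarts K (1 / (n + 1)) :=
      ⟨hx, hgap.mono_left (Ioo_subset_Ioo_right (by linarith))⟩
    exact ⟨r n x, ⟨(hr n x).1, by linarith [(hr n x).2]⟩, mem_iUnion.2 ⟨n, x, hxn, rfl⟩⟩
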